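/- arXiv:2406.12565 — 4 statements merged into one kernel-verified Lean document; each statement's English description precedes it below -/
import Mathlib

section
/- The map δ_{1-β,β} : 𝒲 → 𝓕_{1-β} ⊗ 𝓕_β defined by δ(L_n) = Σ_{i=0}^{n-1} (i - nβ) v_i ⊗ w_{n-i} for n ≥ 1, δ(L_0) = 0, and δ(L_n) = -Σ_{i=n}^{-1} (i - nβ) v_i ⊗ w_{n-i} for n ≤ -1, is a 1-cocycle: δ([L_m, L_n]) = L_m · δ(L_n) - L_n · δ(L_m) for all m, n ∈ ℤ. -/
/-- The action of the Witt basis element `L m` on `𝓕_α ⊗ 𝓕_β`, realized on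
`(ℤ × ℤ) →₀ ℂ` with basis `v_i ⊗ w_j ↦ single (i, j) 1`:
`L_m · (v_i ⊗ w_j) = -(i + αm) v_{m+i} ⊗ w_j - (j + βm) v_i ⊗ w_{m+j}`. -/
noncomputable def tact (α β : ℂ) (m : ℤ) : ((ℤ × ℤ) →₀ ℂ) →ₗ[ℂ] ((ℤ × ℤ) →₀ ℂ) :=
  Finsupp.lsum ℂ fun p => LinearMap.toSpanSingleton ℂ ((ℤ × ℤ) →₀ ℂ)
    ((-((p.1 : ℂ) + α * m)) • Finsupp.single (m + p.1, p.2) (1 : ℂ)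
      + (-((p.2 : ℂ) + β * m)) • Finsupp.single (p.1, m + p.2) (1 : ℂ))

/-- A family `d n = d(L_n)` is a 1-cocycle of the Witt algebra with
coefficients in `𝓕_α ⊗ 𝓕_β`: `d([L_m, L_n]) = L_m · d(L_n) - L_n · d(L_m)`. -/
def IsCocycle (α β : ℂ) (d : ℤ → ((ℤ × ℤ) →₀ ℂ)) : Prop :=
  ∀ m n : ℤ, ((m - n : ℤ) : ℂ) • d (m + n) = tact α β m (d n) - tact α β n (d m)

/-- `d` is a 1-coboundary: `d(L_n) = L_n · u` for a fixed `u` in the module. -/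
def IsCoboundary (α β : ℂ) (d : ℤ → ((ℤ × ℤ) →₀ ℂ)) : Prop :=
  ∃ u : (ℤ × ℤ) →₀ ℂ, ∀ n : ℤ, d n = tact α β n u

/-- The map `δ_{1-β,β} : 𝒲 → 𝓕_{1-β} ⊗ 𝓕_β`. -/
noncomputable def deltaβ (β : ℂ) (n : ℤ) : (ℤ × ℤ) →₀ ℂ :=
  if 1 ≤ n then
    ∑ i ∈ Finset.Icc (0 : ℤ) (n - 1), ((i : ℂ) - n * β) • Finsupp.single (i, n - i) (1 : ℂ)
  else if n = 0 then 0
  else - ∑ i ∈ Finset.Icc n (-1 : ℤ), ((i : ℂ) - n * β) • Finsupp.single (i, n - i) (1 : ℂ)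

/-! `δ_{1-β,β}` is formally the coboundary `L_n ↦ L_n · u` of the infinite sum
`u = Σ_{i ≥ 0} v_i ⊗ w_{-i}`. This `u` is not in `𝓕_{1-β} ⊗ 𝓕_β`, but the formula for the action
makes sense on all functions `ℤ × ℤ → ℂ`, where it still satisfies
`L_m L_n - L_n L_m = (m - n) L_{m+n}`; the cocycle identity for `δ` is then that of a coboundary. -/

def formalTact (α β : ℂ) (m : ℤ) (f : ℤ × ℤ → ℂ) : ℤ × ℤ → ℂ := fun p =>
  -((p.1 - m : ℂ) + α * m) * f (p.1 - m, p.2) - ((p.2 - m : ℂ) + β * m) * f (p.1, p.2 - m)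

theorem formalTact_sub_formalTact (α β : ℂ) (m n : ℤ) (f : ℤ × ℤ → ℂ) :
    formalTact α β m (formalTact α β n f) - formalTact α β n (formalTact α β m f)
      = ((m - n : ℤ) : ℂ) • formalTact α β (m + n) f := by
  funext ⟨a, b⟩
  simp only [formalTact, Pi.sub_apply, Pi.smul_apply, smul_eq_mul, sub_sub, add_comm n m]
  push_cast
  ring

theorem coe_tact (α β : ℂ) (m : ℤ) (f : (ℤ × ℤ) →₀ ℂ) :
    ⇑(tact α β m f) = formalTact α β m f := by
  induction f using Finsupp.induction_linear with
  | zero => funext; simp [formalTact]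
  | add f g hf hg =>
    funext p
    simp only [map_add, Finsupp.coe_add, Pi.add_apply, hf, hg, formalTact]
    ring
  | single p c =>
    funext ⟨a, b⟩
    obtain ⟨i, j⟩ := p
    simp only [tact, Finsupp.lsum_single, LinearMap.toSpanSingleton_apply, formalTact,
      Finsupp.smul_apply, Finsupp.add_apply, Finsupp.single_apply, Prod.mk.injEq, smul_eq_mul,
      show m + i = a ↔ i = a - m by omega, show m + j = b ↔ j = b - m by omega]
    split_ifs with hv hw hw
    · obtain ⟨rfl, rfl⟩ := hv
      obtain rfl : m = 0 := by omega
      push_cast; ring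
    · obtain ⟨rfl, rfl⟩ := hv; push_cast; ring
    · obtain ⟨rfl, rfl⟩ := hw; push_cast; ring
    · simp

theorem isCocycle_of_coe_eq_formalTact (α β : ℂ) (d : ℤ → (ℤ × ℤ) →₀ ℂ) (u : ℤ × ℤ → ℂ)
    (hd : ∀ n, ⇑(d n) = formalTact α β n u) : IsCocycle α β d := by
  intro m n
  apply DFunLike.coe_injective
  simp only [Finsupp.coe_smul, Finsupp.coe_sub, coe_tact, hd, formalTact_sub_formalTact]

theorem sum_Icc_smul_single_antidiagonal_apply (c : ℤ → ℂ) (n lo hi a b : ℤ) :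
    (∑ i ∈ Finset.Icc lo hi, c i • Finsupp.single (i, n - i) (1 : ℂ)) (a, b)
      = if b = n - a ∧ lo ≤ a ∧ a ≤ hi then c a else 0 := by
  simp only [Finset.sum_apply', Finsupp.smul_apply, Finsupp.single_apply, Prod.mk.injEq,
    smul_eq_mul, mul_ite, mul_one, mul_zero, ite_and, Finset.sum_ite_eq', Finset.mem_Icc]
  split_ifs <;> first | rfl | (exfalso; omega)

def deltaPrimitive : ℤ × ℤ → ℂ := fun p => if 0 ≤ p.1 ∧ p.2 = -p.1 then 1 else 0

theorem coe_deltaβ (β : ℂ) (n : ℤ) :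
    ⇑(deltaβ β n) = formalTact (1 - β) β n deltaPrimitive := by
  funext ⟨a, b⟩
  simp only [formalTact, deltaPrimitive]
  unfold deltaβ
  rcases lt_trichotomy n 0 with hn | hn | hn <;> [
    rw [if_neg (by omega), if_neg (by omega), Finsupp.neg_apply,
      sum_Icc_smul_single_antidiagonal_apply];
    rw [if_neg (by omega), if_pos hn, Finsupp.coe_zero, Pi.zero_apply];
    rw [if_pos (by omega), sum_Icc_smul_single_antidiagonal_apply]] <;>
  split_ifs <;> first
    | (exfalso; omega)
    | (simp only [mul_zero, sub_zero, neg_zero]; done)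
    | (obtain rfl : b = n - a := by omega
       push_cast; ring)

/-- `δ_{1-β,β}` is a 1-cocycle of the Witt algebra with
coefficients in `𝓕_{1-β} ⊗ 𝓕_β`. -/
theorem delta_isCocycle (β : ℂ) : IsCocycle (1 - β) β (deltaβ β) :=
  isCocycle_of_coe_eq_formalTact _ _ _ _ (coe_deltaβ β)
end

section
/- For β ∈ ℂ with β ∉ ℤ, the 1-cocycle δ_{1-β,β} of the Witt algebra with coefficients in 𝓕_{1-β} ⊗ 𝓕_β is not a 1-coboundary: there is no element u ∈ 𝓕_{1-β} ⊗ 𝓕_β with δ_{1-β,β}(L_n) = L_n · u for all n ∈ ℤ. -/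
section FiniteSupport

variable {M : Type*} [Zero M] {f : ℤ → M}

lemma eq_zero_of_forall_le_apply_succ_eq (hf : (Function.support f).Finite) {a : ℤ}
    (h : ∀ k, a ≤ k → f (k + 1) = f k) : f a = 0 := by
  obtain ⟨k, hak, hk⟩ := (Set.Ici_infinite a).exists_notMem_finite hf
  have hconst : ∀ k, a ≤ k → f k = f a :=
    Int.leInduction rfl fun k hak ih => (h k hak).trans ih
  rw [← hconst k hak]
  exact Function.notMem_support.mp hk

lemma eq_zero_of_forall_ge_apply_pred_eq (hf : (Function.support f).Finite) {a : ℤ}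
    (h : ∀ k, k ≤ a → f (k - 1) = f k) : f a = 0 := by
  obtain ⟨k, hka, hk⟩ := (Set.Iic_infinite a).exists_notMem_finite hf
  have hconst : ∀ k, k ≤ a → f k = f a :=
    Int.leInductionDown rfl fun k hka ih => (h k hka).trans ih
  rw [← hconst k hka]
  exact Function.notMem_support.mp hk

end FiniteSupport

lemma tact_apply (α β : ℂ) (m a b : ℤ) (u : (ℤ × ℤ) →₀ ℂ) :
    tact α β m u (a, b)
      = -(((a : ℂ) - m) + α * m) * u (a - m, b)
        + -(((b : ℂ) - m) + β * m) * u (a, b - m) := by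
  induction u using Finsupp.induction_linear with
  | zero => simp
  | add f g hf hg => simp only [map_add, Finsupp.add_apply, hf, hg]; ring
  | single p c =>
    obtain ⟨i, j⟩ := p
    simp only [tact, Finsupp.lsum_single, LinearMap.toSpanSingleton_apply, Finsupp.smul_apply,
      Finsupp.add_apply, Finsupp.single_apply, Prod.mk.injEq, smul_eq_mul,
      show (i = a - m ∧ j = b) ↔ (m + i = a ∧ j = b) by omega,
      show (i = a ∧ j = b - m) ↔ (i = a ∧ m + j = b) by omega]
    split_ifs with h₁ h₂ h₂
    · obtain ⟨rfl, rfl⟩ := h₁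
      obtain rfl : m = 0 := by omega
      push_cast; ring
    · obtain ⟨rfl, rfl⟩ := h₁
      push_cast; ring
    · obtain ⟨rfl, rfl⟩ := h₂
      push_cast; ring
    · ring

lemma deltaβ_one (β : ℂ) : deltaβ β 1 = (-β) • Finsupp.single (0, 1) 1 := by
  simp [deltaβ]

lemma tact_one_sub_one_apply (β : ℂ) (k : ℤ) (u : (ℤ × ℤ) →₀ ℂ) :
    tact (1 - β) β 1 u (k, 1 - k) = (k - β) * (u (k, -k) - u (k - 1, -(k - 1))) := by
  rw [tact_apply, show (1 - k - 1 : ℤ) = -k by ring, show (1 - k : ℤ) = -(k - 1) by ring]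
  push_cast
  ring

/-- for `β ∉ ℤ`, the 1-cocycle `δ_{1-β,β}` is not a 1-coboundary. -/
theorem delta_not_coboundary (β : ℂ) (hβ : ∀ k : ℤ, (k : ℂ) ≠ β) :
    ¬ IsCoboundary (1 - β) β (deltaβ β) := by
  rintro ⟨u, hu⟩
  set c : ℤ → ℂ := fun k => u (k, -k)
  have hc : (Function.support c).Finite :=
    Set.Finite.preimage (fun k _ l _ h => congrArg Prod.fst h) u.hasFiniteSupport
  have hrec (k : ℤ) : (k - β) * (c k - c (k - 1)) = if k = 0 then -β else 0 := by
    rw [← tact_one_sub_one_apply, ← hu 1, deltaβ_one]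
    by_cases hk : k = 0 <;> simp [hk]
  have hstep (k : ℤ) (hk : k ≠ 0) : c k = c (k - 1) := by
    have h := hrec k
    rw [if_neg hk] at h
    exact sub_eq_zero.mp ((mul_eq_zero.mp h).resolve_left (sub_ne_zero.mpr (hβ k)))
  have hjump : c 0 - c (-1) = 1 := by
    have hβ₀ : β ≠ 0 := fun h => hβ 0 (by simp [h])
    have h := hrec 0
    rw [if_pos rfl, Int.cast_zero, zero_sub, zero_sub] at h
    exact mul_left_cancel₀ (neg_ne_zero.mpr hβ₀) (h.trans (mul_one _).symm)
  have hc₀ : c 0 = 0 := eq_zero_of_forall_le_apply_succ_eq hc fun k hk =>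
    (hstep (k + 1) (by omega)).trans (by rw [add_sub_cancel_right])
  have hc₁ : c (-1) = 0 := eq_zero_of_forall_ge_apply_pred_eq hc fun k hk =>
    (hstep k (by omega)).symm
  simp [hc₀, hc₁] at hjump
end

section
/- The 1-cocycle δ⁵_{0,0} of the Witt algebra with coefficients in 𝓕_0 ⊗ 𝓕_0 is not a 1-coboundary. -/
/-- The map `δ⁵_{0,0} : 𝒲 → 𝓕_0 ⊗ 𝓕_0`. -/
noncomputable def d5 (n : ℤ) : (ℤ × ℤ) →₀ ℂ :=
  if n = 0 then Finsupp.single ((0 : ℤ), (0 : ℤ)) (1 : ℂ)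
  else if n = 1 then 0
  else if 2 ≤ n then - ∑ i ∈ Finset.Icc (1 : ℤ) (n - 1), Finsupp.single (i, n - i) (1 : ℂ)
  else ∑ i ∈ Finset.Icc n (0 : ℤ), Finsupp.single (i, n - i) (1 : ℂ)

/-! `L_0` acts diagonally, by the scalar `-(i + j)` on `v_i ⊗ w_j`, so the value `L_0 · u` of any
coboundary has no `v_0 ⊗ w_0` component, whereas `δ⁵_{0,0}(L_0) = v_0 ⊗ w_0`. -/

theorem tact_zero_single (α β : ℂ) (p : ℤ × ℤ) (c : ℂ) :
    tact α β 0 (Finsupp.single p c) = Finsupp.single p (-((p.1 : ℂ) + p.2) * c) := by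
  simp only [tact, Finsupp.lsum_single, LinearMap.toSpanSingleton_apply, Int.cast_zero, mul_zero,
    add_zero, zero_add, Prod.mk.eta, Finsupp.smul_single, ← Finsupp.single_add, smul_eq_mul]
  ring_nf

theorem tact_zero_apply (α β : ℂ) (u : (ℤ × ℤ) →₀ ℂ) (p : ℤ × ℤ) :
    tact α β 0 u p = -((p.1 : ℂ) + p.2) * u p := by
  induction u using Finsupp.induction_linear with
  | zero => simp
  | add f g hf hg => simp [hf, hg, mul_add]
  | single q c =>
    rw [tact_zero_single]
    by_cases h : q = p
    · subst h; simp
    · simp [h]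

/-- the 1-cocycle `δ⁵_{0,0}` is not a 1-coboundary. -/
theorem d5_not_coboundary : ¬ IsCoboundary 0 0 d5 := by
  rintro ⟨u, hu⟩
  have h : d5 0 (0, 0) = 1 := by simp [d5]
  rw [hu 0, tact_zero_apply] at h
  simp at h
end

section
/- The map δ¹_{0,1} : 𝒲 → 𝓕_0 ⊗ 𝓕_1 given by δ¹_{0,1}(L_n) = n² v_0 ⊗ w_n is a 1-cocycle of the Witt algebra, and it is not a 1-coboundary. -/
/-!
`L_m` sends `v_0 ⊗ w_n` to a multiple of `v_0 ⊗ w_{m+n}`, so the cocycle identity is a scalar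
identity. For the second part, sum the coefficients along the diagonal `i + j = n`: since `L_m`
raises `i + j` by `m` and scales `v_i ⊗ w_j` by `-(i + j + (α + β) m)` in total, for
`α + β = 1` this functional sends `L_n · u` to `-n` times the diagonal sum of `u` at `0`,
an odd function of `n`, whereas it sends `n² v_0 ⊗ w_n` to `n²`.
-/

lemma tact_single (α β : ℂ) (m i j : ℤ) (c : ℂ) :
    tact α β m (Finsupp.single (i, j) c)
      = (c * (-((i : ℂ) + α * m))) • Finsupp.single (m + i, j) (1 : ℂ)
        + (c * (-((j : ℂ) + β * m))) • Finsupp.single (i, m + j) (1 : ℂ) := by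
  rw [tact, Finsupp.lsum_single, LinearMap.toSpanSingleton_apply, smul_add, smul_smul, smul_smul]

lemma tact_zero_single_zero (β : ℂ) (m n : ℤ) :
    tact 0 β m (Finsupp.single (0, n) 1)
      = (-((n : ℂ) + β * m)) • Finsupp.single (0, m + n) (1 : ℂ) := by
  rw [tact_single]
  simp only [Int.cast_zero, zero_mul, add_zero, neg_zero, mul_zero, zero_smul, zero_add, one_mul]

noncomputable def diagSum (n : ℤ) : ((ℤ × ℤ) →₀ ℂ) →ₗ[ℂ] ℂ :=
  Finsupp.lsum ℂ fun p => if p.1 + p.2 = n then LinearMap.id else 0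

lemma diagSum_single (n i j : ℤ) (c : ℂ) :
    diagSum n (Finsupp.single (i, j) c) = if i + j = n then c else 0 := by
  rw [diagSum, Finsupp.lsum_single]
  split_ifs <;> simp

lemma diagSum_tact (α β : ℂ) (n m : ℤ) (x : (ℤ × ℤ) →₀ ℂ) :
    diagSum n (tact α β m x) = -((n : ℂ) + (α + β - 1) * m) * diagSum (n - m) x := by
  induction x using Finsupp.induction_linear with
  | zero => simp
  | add a b ha hb => rw [map_add, map_add, map_add, ha, hb]; ring
  | single p c =>
    obtain ⟨i, j⟩ := p
    rw [tact_single, map_add, map_smul, map_smul, diagSum_single, diagSum_single,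
      diagSum_single, smul_eq_mul, smul_eq_mul]
    by_cases h : i + j = n - m
    · rw [if_pos h, if_pos (by omega), if_pos (by omega)]
      have hn : (n : ℂ) = i + j + m := by exact_mod_cast (by omega : n = i + j + m)
      rw [hn]
      ring
    · rw [if_neg h, if_neg (by omega), if_neg (by omega)]
      ring

/-- the map `δ¹_{0,1}(L_n) = n² v_0 ⊗ w_n` is a 1-cocycle of the
Witt algebra with coefficients in `𝓕_0 ⊗ 𝓕_1`, and not a 1-coboundary. -/
theorem d01sq_cocycle_not_coboundary :
    IsCocycle 0 1 (fun n => ((n : ℂ) ^ 2) • Finsupp.single ((0 : ℤ), n) (1 : ℂ)) ∧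
    ¬ IsCoboundary 0 1 (fun n => ((n : ℂ) ^ 2) • Finsupp.single ((0 : ℤ), n) (1 : ℂ)) := by
  constructor
  · intro m n
    rw [map_smul, map_smul, tact_zero_single_zero, tact_zero_single_zero, add_comm n m]
    simp only [smul_smul, ← sub_smul]
    congr 1
    push_cast
    ring
  · rintro ⟨u, hu⟩
    have hdiag (n : ℤ) : (n : ℂ) ^ 2 = -n * diagSum 0 u := by
      have := congrArg (diagSum n) (hu n)
      rwa [diagSum_tact, map_smul, diagSum_single, if_pos (zero_add n), sub_self, smul_eq_mul,
        mul_one, zero_add, sub_self, zero_mul, add_zero] at this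
    have h1 := hdiag 1
    have h2 := hdiag (-1)
    push_cast at h1 h2
    have : (2 : ℂ) = 0 := by linear_combination h1 + h2
    norm_num at this
end
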